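/- arXiv:math/0602531 — 2 statements merged into one kernel-verified Lean document; each statement's English description precedes it below -/
import Mathlib

section
/- Let K' be obtained from the simplicial complex K by an admissible contraction of v0 onto v1. Define φ_* on basis faces of C_•(K'_*; Z/2) by φ_*(S¹ ⊎ T²) = Σ_{A ∈ supp φ(S), B ∈ supp φ(T)} A¹ ⊎ B². Then every set A¹ ⊎ B² occurring in this sum is a face of K_* (i.e., A ∩ B = ∅), and the linear extension φ_* : C_•(K'_*; Z/2) → C_•(K_*; Z/2) is an injective chain map that commutes with the linear maps induced by the involutions τ of K'_* and of K_*. -/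
open Finset

variable {V : Type*} [DecidableEq V]

/-- A (finite) simplicial complex, given by its finite family of faces:
closed under subsets and containing the empty set.  The vertices of `K` are
exactly the elements `v` with `{v} ∈ K`. -/
def IsComplex (K : Finset (Finset V)) : Prop :=
  ∅ ∈ K ∧ ∀ S ∈ K, ∀ T ⊆ S, T ∈ K

/-- The dimension of `K` : the maximum of `|F| - 1` over the faces `F` of `K`. -/
def dimC (K : Finset (Finset V)) : ℤ :=
  ((K.sup Finset.card : ℕ) : ℤ) - 1

/-- `T` is a missing face of `K` : a set of vertices of `K` which is not a face of `K`
while all its proper subsets are faces of `K`. -/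
def IsMissingFace (K : Finset (Finset V)) (T : Finset V) : Prop :=
  (∀ x ∈ T, ({x} : Finset V) ∈ K) ∧ T ∉ K ∧ ∀ S ⊂ T, S ∈ K

/-- The contraction of `u` onto `v` is admissible if no missing face of `K` of
dimension `≤ dim K` contains both `u` and `v`. -/
def Admissible (K : Finset (Finset V)) (u v : V) : Prop :=
  ∀ T : Finset V, IsMissingFace K T → (T.card : ℤ) - 1 ≤ dimC K → ¬(u ∈ T ∧ v ∈ T)

/-- The contraction of `u` onto `v`:
`K' = {T ∈ K : u ∉ T} ∪ {(T \ {u}) ∪ {v} : u ∈ T ∈ K}`. -/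
def contractC (K : Finset (Finset V)) (u v : V) : Finset (Finset V) :=
  K.filter (fun T => u ∉ T) ∪ (K.filter (fun T => u ∈ T)).image (fun T => insert v (T.erase u))

/-- The link of a face: `lk(S,K) = {T ∈ K : T ∩ S = ∅ ∧ T ∪ S ∈ K}`. -/
def linkC (K : Finset (Finset V)) (S : Finset V) : Finset (Finset V) :=
  K.filter (fun T => T ∩ S = ∅ ∧ T ∪ S ∈ K)

/-- The `m`-skeleton: all faces of dimension at most `m`. -/
def skelC (K : Finset (Finset V)) (m : ℤ) : Finset (Finset V) :=
  K.filter (fun F => (F.card : ℤ) - 1 ≤ m)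

/-- The faces of `K` of dimension `n`, i.e. of cardinality `n + 1`. -/
def facesOfDim (K : Finset (Finset V)) (n : ℕ) : Finset (Finset V) :=
  K.filter (fun F => F.card = n + 1)

/-- `C_n(K; ℤ/2)`: the `ℤ/2`-vector space with basis the `n`-dimensional faces of `K`,
realized as the space of `ℤ/2`-valued functions on the `n`-dimensional faces. -/
abbrev Chains (K : Finset (Finset V)) (n : ℕ) : Type _ :=
  {F : Finset V // F ∈ facesOfDim K n} → ZMod 2

/-- The boundary map `∂ : C_{n+1}(K;ℤ/2) → C_n(K;ℤ/2)`, determined on a basis face `F`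
by `∂F = Σ_{x ∈ F} (F \ {x})`.  (The coefficient of `G` in `∂F` is `1` iff `G ⊆ F`,
as `G` and `F` are faces with `|F| = |G| + 1`.) -/
def bdry (K : Finset (Finset V)) (n : ℕ) (c : Chains K (n + 1)) : Chains K n :=
  fun G => ∑ F ∈ (facesOfDim K (n + 1)).attach, if G.1 ⊆ F.1 then c F else 0

/-- `supp φ(F)` for the contraction of `v0` onto `v1` turning `K` into `K'`:
`{F}` if `F ∈ K`, and `{(F \ {x}) ∪ {v0} : x ∈ F, (F \ {x}) ∪ {v0} ∈ K}` otherwise. -/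
def suppPhi (K : Finset (Finset V)) (v0 : V) (F : Finset V) : Finset (Finset V) :=
  if F ∈ K then {F}
  else (F.image fun x => insert v0 (F.erase x)).filter (fun A => A ∈ K)

/-- The face `S¹ ⊎ T²` of the join of two disjoint copies of the vertex set. -/
def joinFace (S T : Finset V) : Finset (V ⊕ V) :=
  S.map ⟨Sum.inl, Sum.inl_injective⟩ ∪ T.map ⟨Sum.inr, Sum.inr_injective⟩

/-- The deleted join `K_*`: its faces are the sets `S¹ ⊎ T²` with `S, T ∈ K` and
`S ∩ T = ∅`. -/
def deletedJoin (K : Finset (Finset V)) : Finset (Finset (V ⊕ V)) :=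
  ((K ×ˢ K).filter fun p => p.1 ∩ p.2 = ∅).image fun p => joinFace p.1 p.2

/-- The involution `τ` of the deleted join on faces, sending `S¹ ⊎ T²` to `T¹ ⊎ S²`. -/
def tauFace (F : Finset (V ⊕ V)) : Finset (V ⊕ V) :=
  F.map ⟨Sum.swap, Sum.swap_leftInverse.injective⟩

/-- The linear map induced by the involution `τ` on `ℤ/2`-(co)chains of a complex `L`
on the doubled vertex set: `(τ c)(F) = c(τ F)`. -/
def tauChain (L : Finset (Finset (V ⊕ V))) (n : ℕ) (c : Chains L n) : Chains L n :=
  fun F => if h : tauFace F.1 ∈ facesOfDim L n then c ⟨tauFace F.1, h⟩ else 0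

/-- The first-copy part `S` of a face `F = S¹ ⊎ T²` of the (deleted) join. -/
def leftPart (F : Finset (V ⊕ V)) : Finset V :=
  F.biUnion fun x => match x with | Sum.inl a => {a} | Sum.inr _ => ∅

/-- The second-copy part `T` of a face `F = S¹ ⊎ T²` of the (deleted) join. -/
def rightPart (F : Finset (V ⊕ V)) : Finset V :=
  F.biUnion fun x => match x with | Sum.inl _ => ∅ | Sum.inr a => {a}

/-- The support of `φ_*` on a basis face `G = S¹ ⊎ T²` of `K'_*`:
all the sets `A¹ ⊎ B²` with `A ∈ supp φ(S)` and `B ∈ supp φ(T)`. -/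
def suppPhiStar (K : Finset (Finset V)) (v0 : V) (G : Finset (V ⊕ V)) :
    Finset (Finset (V ⊕ V)) :=
  ((suppPhi K v0 (leftPart G)) ×ˢ (suppPhi K v0 (rightPart G))).image
    fun p => joinFace p.1 p.2

/-- The map `φ_* : C_•(K'_*;ℤ/2) → C_•(K_*;ℤ/2)` determined on a basis face
`G = S¹ ⊎ T²` of `K'_*` by `φ_*(S¹ ⊎ T²) = Σ_{A ∈ supp φ(S), B ∈ supp φ(T)} A¹ ⊎ B²`. -/
def phiStar (K K' : Finset (Finset V)) (v0 : V) (n : ℕ)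
    (c : Chains (deletedJoin K') n) : Chains (deletedJoin K) n :=
  fun A => ∑ G ∈ (facesOfDim (deletedJoin K') n).attach,
    if A.1 ∈ suppPhiStar K v0 G.1 then c G else 0

/-!
The support of `φ_*(S¹ ⊎ T²)` is the product of `supp φ(S)` and `supp φ(T)`. Hence, mod 2,
the coefficient of `P¹ ⊎ Q²` in `∂ φ_*(S¹ ⊎ T²)` is `f(P,S) f(Q,T)`, with `f(P,S)` the number
of `A ∈ supp φ(S)` containing `P` (`bdryPhiCoeff`), and in `φ_* ∂(S¹ ⊎ T²)` it is
`g(P,S) g(Q,T)`, with `g(P,S)` the number of `S' ⊆ S` with `P ∈ supp φ(S')` (`phiBdryCoeff`). Counting cardinalities, one factor on each side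
is `[P ∈ supp φ(S)]` and it remains to see `f(Q,T) = g(Q,T)` for `|Q| + 1 = |T|`. When `T ∉ K`
both are sums over `x ∈ T` of conditions on `T \ {x}`, and admissibility gives
`T \ {x} ∪ {v0} ∈ K ↔ T \ {x} ∈ K`: then the terms agree if `v0 ∉ Q`, and if `Q = R ∪ {v0}`
the two sums add up to `#(T \ R) = 2`.

`φ_*` is injective because `supp φ(S)` contains a face (`S`, or `S \ {v1} ∪ {v0}`) lying in
no other `supp φ(S')`, and it commutes with `τ` because `supp φ_*` commutes with swapping the
two copies.
-/

open Matrix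

theorem sum_powerset_eq_sum_erase {M : Type*} [AddCommMonoid M] {T : Finset V}
    {h : Finset V → M} (hh : ∀ S ⊆ T, S.card + 1 ≠ T.card → h S = 0) :
    ∑ S ∈ T.powerset, h S = ∑ x ∈ T, h (T.erase x) := by
  rw [← sum_image (erase_injOn T)]
  refine (sum_subset (fun S hS => ?_) fun S hS hST => hh S (mem_powerset.1 hS) ?_).symm
  · obtain ⟨x, -, rfl⟩ := mem_image.1 hS
    exact mem_powerset.2 (erase_subset x T)
  · intro hcard
    obtain ⟨x, hx, rfl⟩ := exists_eq_insert_iff.2 ⟨mem_powerset.1 hS, hcard⟩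
    exact hST (mem_image.2 ⟨x, mem_insert_self x S, erase_insert hx⟩)

theorem exists_isMissingFace_subset {W : Type*} {K : Finset (Finset W)} {C : Finset W}
    (hC : C ∉ K) (hsingle : ∀ x ∈ C, {x} ∈ K) : ∃ M ⊆ C, IsMissingFace K M := by
  obtain ⟨M, hMC, hM⟩ := exists_minimal_le_of_wellFoundedLT (· ∉ K) C hC
  exact ⟨M, hMC, fun x hx => hsingle x (hMC hx), hM.prop,
    fun S hS => not_not.1 (hM.not_prop_of_lt hS)⟩

theorem Matrix.mulVec_injective_of_forall_exists_row_eq_single {m n R : Type*} [Fintype n]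
    [DecidableEq n] [NonAssocSemiring R] {M : Matrix m n R}
    (h : ∀ j, ∃ i, M i = Pi.single j 1) : Function.Injective M.mulVec := by
  intro c c' hc
  funext j
  obtain ⟨i, hi⟩ := h j
  simpa [Matrix.mulVec, hi, single_dotProduct] using congrFun hc i

theorem Matrix.mulVec_comp_perm {m n R : Type*} [Fintype n] [NonUnitalNonAssocSemiring R]
    {M : Matrix m n R} {e : Equiv.Perm m} {e' : Equiv.Perm n} (h : M.submatrix e e' = M)
    (c : n → R) : M *ᵥ (c ∘ e') = (M *ᵥ c) ∘ e := by
  conv_lhs => rw [← h]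
  rw [submatrix_mulVec_equiv, Function.comp_assoc, Equiv.self_comp_symm, Function.comp_id]

section Join

theorem joinFace_eq_disjSum (S T : Finset V) : joinFace S T = S.disjSum T := by
  ext (x | x) <;> simp [joinFace]

theorem leftPart_eq_toLeft (F : Finset (V ⊕ V)) : leftPart F = F.toLeft := by
  ext a
  simp only [leftPart, mem_biUnion, mem_toLeft]
  constructor
  · rintro ⟨(b | b), hb, hab⟩ <;> simp_all
  · exact fun h => ⟨.inl a, h, mem_singleton_self a⟩

theorem rightPart_eq_toRight (F : Finset (V ⊕ V)) : rightPart F = F.toRight := by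
  ext a
  simp only [rightPart, mem_biUnion, mem_toRight]
  constructor
  · rintro ⟨(b | b), hb, hab⟩ <;> simp_all
  · exact fun h => ⟨.inr a, h, mem_singleton_self a⟩

theorem toLeft_tauFace {W : Type*} (F : Finset (W ⊕ W)) : (tauFace F).toLeft = F.toRight :=
  toLeft_map_sumComm

theorem toRight_tauFace {W : Type*} (F : Finset (W ⊕ W)) : (tauFace F).toRight = F.toLeft :=
  toRight_map_sumComm

theorem disjSum_mem_deletedJoin {K : Finset (Finset V)} {S T : Finset V} :
    S.disjSum T ∈ deletedJoin K ↔ S ∈ K ∧ T ∈ K ∧ S ∩ T = ∅ := by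
  simp [deletedJoin, joinFace_eq_disjSum, and_assoc]

theorem mem_deletedJoin {K : Finset (Finset V)} {F : Finset (V ⊕ V)} :
    F ∈ deletedJoin K ↔ F.toLeft ∈ K ∧ F.toRight ∈ K ∧ F.toLeft ∩ F.toRight = ∅ := by
  rw [← disjSum_mem_deletedJoin, toLeft_disjSum_toRight]

theorem IsComplex.deletedJoin {K : Finset (Finset V)} (hK : IsComplex K) :
    IsComplex (deletedJoin K) := by
  refine ⟨by simpa using disjSum_mem_deletedJoin.2 ⟨hK.1, hK.1, rfl⟩, fun F hF F' hF' => ?_⟩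
  obtain ⟨hl, hr, hd⟩ := mem_deletedJoin.1 hF
  have hl' := toLeft_subset_toLeft hF'
  have hr' := toRight_subset_toRight hF'
  exact mem_deletedJoin.2 ⟨hK.2 _ hl _ hl', hK.2 _ hr _ hr',
    subset_empty.1 (hd ▸ inter_subset_inter hl' hr')⟩

theorem tauFace_mem_deletedJoin {K : Finset (Finset V)} {F : Finset (V ⊕ V)}
    (hF : F ∈ deletedJoin K) : tauFace F ∈ deletedJoin K := by
  obtain ⟨hl, hr, hd⟩ := mem_deletedJoin.1 hF
  rw [mem_deletedJoin, toLeft_tauFace, toRight_tauFace, inter_comm]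
  exact ⟨hr, hl, hd⟩

theorem sum_powerset_eq_sum_sum {M : Type*} [AddCommMonoid M] (G : Finset (V ⊕ V))
    (h : Finset (V ⊕ V) → M) :
    ∑ G' ∈ G.powerset, h G' =
      ∑ S ∈ G.toLeft.powerset, ∑ T ∈ G.toRight.powerset, h (S.disjSum T) := by
  have hG : G.powerset = (G.toLeft.powerset ×ˢ G.toRight.powerset).image
      fun p => p.1.disjSum p.2 := by
    ext G'
    simp only [mem_powerset, mem_image, mem_product, Prod.exists]
    refine ⟨fun h => ⟨_, _, ⟨toLeft_subset_toLeft h, toRight_subset_toRight h⟩,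
      toLeft_disjSum_toRight⟩, ?_⟩
    rintro ⟨S, T, hST, rfl⟩
    exact disjSum_subset.2 hST
  rw [hG, sum_image fun p _ q _ h => Prod.ext (disjSum_inj.1 h).1 (disjSum_inj.1 h).2,
    sum_product]

end Join

section Contraction

variable {K : Finset (Finset V)} {v0 v1 : V}

theorem mem_contractC {S : Finset V} :
    S ∈ contractC K v0 v1 ↔
      (S ∈ K ∧ v0 ∉ S) ∨ ∃ U ∈ K, v0 ∈ U ∧ insert v1 (U.erase v0) = S := by
  simp [contractC, and_assoc]

theorem notMem_of_mem_contractC (hne : v0 ≠ v1) {S : Finset V}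
    (hS : S ∈ contractC K v0 v1) : v0 ∉ S := by
  rcases mem_contractC.1 hS with ⟨-, h⟩ | ⟨U, -, -, rfl⟩
  · exact h
  · simp [hne]

theorem insert_erase_mem_of_mem_contractC (hK : IsComplex K) {S : Finset V}
    (hS : S ∈ contractC K v0 v1) (hSK : S ∉ K) :
    v1 ∈ S ∧ insert v0 (S.erase v1) ∈ K := by
  obtain ⟨h, -⟩ | ⟨U, hU, hv0U, rfl⟩ := mem_contractC.1 hS
  · exact absurd h hSK
  refine ⟨mem_insert_self _ _, hK.2 U hU _ fun x hx => ?_⟩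
  simp only [mem_insert, mem_erase] at hx
  rcases hx with rfl | ⟨hx1, rfl | ⟨-, hxU⟩⟩
  exacts [hv0U, absurd rfl hx1, hxU]

theorem IsComplex.contractC (hK : IsComplex K) (hne : v0 ≠ v1) :
    IsComplex (contractC K v0 v1) := by
  refine ⟨mem_contractC.2 (.inl ⟨hK.1, notMem_empty _⟩), fun S hS T hTS => ?_⟩
  have hv0T : v0 ∉ T := fun h => notMem_of_mem_contractC hne hS (hTS h)
  obtain ⟨hSK, -⟩ | ⟨U, hU, hv0U, rfl⟩ := mem_contractC.1 hS
  · exact mem_contractC.2 (.inl ⟨hK.2 S hSK T hTS, hv0T⟩)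
  have hTU : T.erase v1 ⊆ U.erase v0 := fun x hx => by
    have := hTS (mem_of_mem_erase hx)
    simp_all
  by_cases hv1T : v1 ∈ T
  · refine mem_contractC.2 (.inr ⟨insert v0 (T.erase v1), ?_, mem_insert_self _ _, ?_⟩)
    · exact hK.2 U hU _ (insert_subset hv0U (hTU.trans (erase_subset _ _)))
    · rw [erase_insert fun h => hv0T (mem_of_mem_erase h), insert_erase hv1T]
  · rw [erase_eq_of_notMem hv1T] at hTU
    exact mem_contractC.2 (.inl ⟨hK.2 U hU _ (hTU.trans (erase_subset _ _)), hv0T⟩)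

end Contraction

section Admissible

variable {K : Finset (Finset V)} {v0 v1 : V}

theorem insert_mem_iff_of_admissible (hK : IsComplex K) (hne : v0 ≠ v1) (h0 : {v0} ∈ K)
    (hadm : Admissible K v0 v1) {S Q : Finset V} (hS : S ∈ contractC K v0 v1)
    (hSK : S ∉ K) (hQS : Q ⊆ S) : insert v0 Q ∈ K ↔ Q ∈ K := by
  refine ⟨fun h => hK.2 _ h _ (subset_insert _ _), fun hQ => ?_⟩
  obtain ⟨hv1S, hS0⟩ := insert_erase_mem_of_mem_contractC hK hS hSK
  by_contra hC
  obtain ⟨M, hMC, hM⟩ := exists_isMissingFace_subset hC fun x hx => by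
    rcases mem_insert.1 hx with rfl | hx
    · exact h0
    · exact hK.2 Q hQ {x} (singleton_subset_iff.2 hx)
  have hv0M : v0 ∈ M := by
    by_contra h
    exact hM.2.1 (hK.2 Q hQ M fun x hx => (mem_insert.1 (hMC hx)).resolve_left
      fun hxv0 => h (hxv0 ▸ hx))
  have hMdim : (M.card : ℤ) - 1 ≤ dimC K := by
    have hQlt : Q.card < S.card := card_lt_card (ssubset_of_subset_of_ne hQS fun h => hSK (h ▸ hQ))
    have hS0card : (insert v0 (S.erase v1)).card = S.card := by
      rw [card_insert_of_notMem fun h => notMem_of_mem_contractC hne hS (mem_of_mem_erase h),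
        card_erase_add_one hv1S]
    have := (card_le_card hMC).trans (card_insert_le v0 Q)
    have := le_sup (f := card) hS0
    unfold dimC
    omega
  have hv1M : v1 ∉ M := fun h => hadm M hM hMdim ⟨hv0M, h⟩
  refine hM.2.1 (hK.2 _ hS0 M fun x hx => ?_)
  rcases mem_insert.1 (hMC hx) with rfl | hxQ
  · exact mem_insert_self _ _
  · exact mem_insert_of_mem (mem_erase.2 ⟨fun hxv1 => hv1M (hxv1 ▸ hx), hQS hxQ⟩)

end Admissible

section SuppPhi

variable {K : Finset (Finset V)} {v0 : V} {A F : Finset V}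

theorem suppPhi_of_mem (hF : F ∈ K) : suppPhi K v0 F = {F} := if_pos hF

theorem mem_suppPhi_of_notMem (hF : F ∉ K) :
    A ∈ suppPhi K v0 F ↔ A ∈ K ∧ ∃ x ∈ F, insert v0 (F.erase x) = A := by
  simp [suppPhi, hF, and_comm]

theorem mem_of_mem_suppPhi (hA : A ∈ suppPhi K v0 F) : A ∈ K := by
  by_cases hF : F ∈ K
  · rw [suppPhi_of_mem hF, mem_singleton] at hA
    rwa [hA]
  · exact ((mem_suppPhi_of_notMem hF).1 hA).1

theorem subset_insert_of_mem_suppPhi (hA : A ∈ suppPhi K v0 F) : A ⊆ insert v0 F := by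
  by_cases hF : F ∈ K
  · rw [suppPhi_of_mem hF, mem_singleton] at hA
    exact hA ▸ subset_insert _ _
  · obtain ⟨-, x, -, rfl⟩ := (mem_suppPhi_of_notMem hF).1 hA
    exact insert_subset_insert _ (erase_subset _ _)

theorem eq_of_mem_suppPhi_of_notMem (hv0A : v0 ∉ A) (hA : A ∈ suppPhi K v0 F) : A = F := by
  by_cases hF : F ∈ K
  · rwa [suppPhi_of_mem hF, mem_singleton] at hA
  · obtain ⟨-, x, -, rfl⟩ := (mem_suppPhi_of_notMem hF).1 hA
    exact absurd (mem_insert_self _ _) hv0A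

theorem card_of_mem_suppPhi (hv0F : v0 ∉ F) (hA : A ∈ suppPhi K v0 F) : A.card = F.card := by
  by_cases hF : F ∈ K
  · rw [suppPhi_of_mem hF, mem_singleton] at hA
    rw [hA]
  · obtain ⟨-, x, hx, rfl⟩ := (mem_suppPhi_of_notMem hF).1 hA
    rw [card_insert_of_notMem fun h => hv0F (mem_of_mem_erase h), card_erase_add_one hx]

theorem mem_suppPhi_iff_eq (hA : A ∈ K) (hv0A : v0 ∉ A) : A ∈ suppPhi K v0 F ↔ F = A :=
  ⟨fun h => (eq_of_mem_suppPhi_of_notMem hv0A h).symm,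
    fun h => by rw [h, suppPhi_of_mem hA]; exact mem_singleton_self A⟩

theorem insert_mem_suppPhi_iff {R : Finset V} (hv0F : v0 ∉ F) (hv0R : v0 ∉ R) :
    insert v0 R ∈ suppPhi K v0 F ↔ insert v0 R ∈ K ∧ F ∉ K ∧ R ⊆ F ∧ R.card + 1 = F.card := by
  by_cases hF : F ∈ K
  · simp only [suppPhi_of_mem hF, mem_singleton, hF, not_true_eq_false, false_and, and_false,
      iff_false]
    exact fun h => hv0F (h ▸ mem_insert_self v0 R)
  have herase : ∀ x, insert v0 (F.erase x) = insert v0 R ↔ F.erase x = R := fun x =>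
    ⟨fun h => by
      rw [← erase_insert hv0R, ← h, erase_insert fun h => hv0F (mem_of_mem_erase h)],
      fun h => h ▸ rfl⟩
  simp only [mem_suppPhi_of_notMem hF, herase, hF, not_false_eq_true, true_and,
    ← exists_eq_insert_iff]
  refine and_congr_right fun _ => ⟨?_, ?_⟩
  · rintro ⟨x, hx, rfl⟩
    exact ⟨x, notMem_erase x F, insert_erase hx⟩
  · rintro ⟨x, hx, rfl⟩
    exact ⟨x, mem_insert_self x R, erase_insert hx⟩

theorem sum_suppPhi_of_notMem {M : Type*} [AddCommMonoid M] (hF : F ∉ K) (hv0F : v0 ∉ F)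
    (h : Finset V → M) :
    ∑ A ∈ suppPhi K v0 F, h A =
      ∑ x ∈ F, if insert v0 (F.erase x) ∈ K then h (insert v0 (F.erase x)) else 0 := by
  have hinj : Set.InjOn (fun x => insert v0 (F.erase x)) F := fun x hx y hy hxy => by
    have hv0 : ∀ z, v0 ∉ F.erase z := fun z h => hv0F (mem_of_mem_erase h)
    exact erase_injOn F hx hy (by simpa [hv0] using congrArg (erase · v0) hxy)
  rw [suppPhi, if_neg hF, sum_filter, sum_image hinj]

end SuppPhi

section SuppPhiStar

variable {K : Finset (Finset V)} {v0 : V}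

theorem mem_facesOfDim {W : Type*} {L : Finset (Finset W)} {F : Finset W} {n : ℕ} :
    F ∈ facesOfDim L n ↔ F ∈ L ∧ F.card = n + 1 :=
  mem_filter

theorem suppPhiStar_eq (G : Finset (V ⊕ V)) :
    suppPhiStar K v0 G =
      (suppPhi K v0 G.toLeft ×ˢ suppPhi K v0 G.toRight).image fun p => p.1.disjSum p.2 := by
  simp only [suppPhiStar, leftPart_eq_toLeft, rightPart_eq_toRight, joinFace_eq_disjSum]

theorem mem_suppPhiStar {A G : Finset (V ⊕ V)} :
    A ∈ suppPhiStar K v0 G ↔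
      A.toLeft ∈ suppPhi K v0 G.toLeft ∧ A.toRight ∈ suppPhi K v0 G.toRight := by
  simp only [suppPhiStar_eq, mem_image, mem_product, Prod.exists, disjSum_eq_iff]
  exact ⟨fun ⟨_, _, h, hl, hr⟩ => hl ▸ hr ▸ h, fun h => ⟨_, _, h, rfl, rfl⟩⟩

theorem sum_suppPhiStar {M : Type*} [AddCommMonoid M] (G : Finset (V ⊕ V))
    (h : Finset (V ⊕ V) → M) :
    ∑ F ∈ suppPhiStar K v0 G, h F =
      ∑ a ∈ suppPhi K v0 G.toLeft, ∑ b ∈ suppPhi K v0 G.toRight, h (a.disjSum b) := by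
  rw [suppPhiStar_eq, sum_image fun p _ q _ h => Prod.ext (disjSum_inj.1 h).1 (disjSum_inj.1 h).2,
    sum_product]

theorem card_of_mem_suppPhiStar {A G : Finset (V ⊕ V)} (hl : v0 ∉ G.toLeft)
    (hr : v0 ∉ G.toRight) (hA : A ∈ suppPhiStar K v0 G) : A.card = G.card := by
  obtain ⟨hAl, hAr⟩ := mem_suppPhiStar.1 hA
  rw [← card_toLeft_add_card_toRight, card_of_mem_suppPhi hl hAl, card_of_mem_suppPhi hr hAr,
    card_toLeft_add_card_toRight]

theorem tauFace_mem_suppPhiStar_tauFace {A G : Finset (V ⊕ V)} :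
    tauFace A ∈ suppPhiStar K v0 (tauFace G) ↔ A ∈ suppPhiStar K v0 G := by
  simp only [mem_suppPhiStar, toLeft_tauFace, toRight_tauFace, and_comm]

end SuppPhiStar

section ContractionFaces

variable {K : Finset (Finset V)} {v0 v1 : V}

theorem v1_mem_of_mem_suppPhi (hK : IsComplex K) (hne : v0 ≠ v1) {S A : Finset V}
    (hS : S ∈ contractC K v0 v1) (hA : A ∈ suppPhi K v0 S) (hv0A : v0 ∈ A) : v1 ∈ S := by
  have hSK : S ∉ K := fun h => by
    rw [suppPhi_of_mem h, mem_singleton] at hA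
    exact notMem_of_mem_contractC hne hS (hA ▸ hv0A)
  exact (insert_erase_mem_of_mem_contractC hK hS hSK).1

theorem inter_eq_empty_of_mem_suppPhi (hK : IsComplex K) (hne : v0 ≠ v1)
    {S T A B : Finset V} (hS : S ∈ contractC K v0 v1) (hT : T ∈ contractC K v0 v1)
    (hST : S ∩ T = ∅) (hA : A ∈ suppPhi K v0 S) (hB : B ∈ suppPhi K v0 T) : A ∩ B = ∅ := by
  refine eq_empty_of_forall_notMem fun q hq => ?_
  obtain ⟨hqA, hqB⟩ := mem_inter.1 hq
  by_cases hq0 : q = v0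
  · subst hq0
    exact notMem_empty v1 (hST ▸ mem_inter.2
      ⟨v1_mem_of_mem_suppPhi hK hne hS hA hqA, v1_mem_of_mem_suppPhi hK hne hT hB hqB⟩)
  · have hqS := (mem_insert.1 (subset_insert_of_mem_suppPhi hA hqA)).resolve_left hq0
    have hqT := (mem_insert.1 (subset_insert_of_mem_suppPhi hB hqB)).resolve_left hq0
    exact notMem_empty q (hST ▸ mem_inter.2 ⟨hqS, hqT⟩)

theorem suppPhiStar_subset_facesOfDim (hK : IsComplex K) (hne : v0 ≠ v1) {n : ℕ}
    {G : Finset (V ⊕ V)} (hG : G ∈ facesOfDim (deletedJoin (contractC K v0 v1)) n) :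
    suppPhiStar K v0 G ⊆ facesOfDim (deletedJoin K) n := by
  intro A hA
  obtain ⟨hGJ, hGcard⟩ := mem_facesOfDim.1 hG
  obtain ⟨hl, hr, hd⟩ := mem_deletedJoin.1 hGJ
  obtain ⟨hAl, hAr⟩ := mem_suppPhiStar.1 hA
  refine mem_facesOfDim.2 ⟨mem_deletedJoin.2 ⟨mem_of_mem_suppPhi hAl, mem_of_mem_suppPhi hAr,
    inter_eq_empty_of_mem_suppPhi hK hne hl hr hd hAl hAr⟩, ?_⟩
  rw [card_of_mem_suppPhiStar (notMem_of_mem_contractC hne hl) (notMem_of_mem_contractC hne hr)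
    hA, hGcard]

theorem mem_facesOfDim_of_mem_suppPhiStar (hK : IsComplex K) (hne : v0 ≠ v1) {n : ℕ}
    {A G G' : Finset (V ⊕ V)} (hA : A ∈ facesOfDim (deletedJoin K) n)
    (hG : G ∈ facesOfDim (deletedJoin (contractC K v0 v1)) (n + 1)) (hG' : G' ⊆ G)
    (hAG' : A ∈ suppPhiStar K v0 G') : G' ∈ facesOfDim (deletedJoin (contractC K v0 v1)) n := by
  have hG'J := (hK.contractC hne).deletedJoin.2 G (mem_facesOfDim.1 hG).1 G' hG'
  obtain ⟨hl, hr, -⟩ := mem_deletedJoin.1 hG'J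
  refine mem_facesOfDim.2 ⟨hG'J, ?_⟩
  rw [← card_of_mem_suppPhiStar (notMem_of_mem_contractC hne hl)
    (notMem_of_mem_contractC hne hr) hAG', (mem_facesOfDim.1 hA).2]

end ContractionFaces

section Canonical

variable {K : Finset (Finset V)} {v0 v1 : V}

def canonFace (K : Finset (Finset V)) (v0 v1 : V) (S : Finset V) : Finset V :=
  if S ∈ K then S else insert v0 (S.erase v1)

theorem canonFace_mem_suppPhi (hK : IsComplex K) {S : Finset V}
    (hS : S ∈ contractC K v0 v1) : canonFace K v0 v1 S ∈ suppPhi K v0 S := by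
  by_cases hSK : S ∈ K
  · rw [canonFace, if_pos hSK, suppPhi_of_mem hSK]
    exact mem_singleton_self S
  · obtain ⟨hv1S, hS0⟩ := insert_erase_mem_of_mem_contractC hK hS hSK
    rw [canonFace, if_neg hSK, mem_suppPhi_of_notMem hSK]
    exact ⟨hS0, v1, hv1S, rfl⟩

theorem eq_of_canonFace_mem_suppPhi (hK : IsComplex K) (hne : v0 ≠ v1) {S S' : Finset V}
    (hS : S ∈ contractC K v0 v1) (hS' : S' ∈ contractC K v0 v1)
    (h : canonFace K v0 v1 S ∈ suppPhi K v0 S') : S' = S := by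
  have hv0S := notMem_of_mem_contractC hne hS
  by_cases hSK : S ∈ K
  · rw [canonFace, if_pos hSK] at h
    exact (eq_of_mem_suppPhi_of_notMem hv0S h).symm
  · rw [canonFace, if_neg hSK, insert_mem_suppPhi_iff (notMem_of_mem_contractC hne hS')
      fun h => hv0S (mem_of_mem_erase h)] at h
    obtain ⟨-, hS'K, hsub, hcard⟩ := h
    have hv1S' := (insert_erase_mem_of_mem_contractC hK hS' hS'K).1
    have hv1S := (insert_erase_mem_of_mem_contractC hK hS hSK).1
    refine (eq_of_subset_of_card_le ?_ ?_).symm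
    · rw [← insert_erase hv1S]
      exact insert_subset hv1S' hsub
    · rw [← hcard, card_erase_add_one hv1S]

end Canonical

section Coefficients

variable {K : Finset (Finset V)} {v0 v1 : V}

def bdryPhiCoeff (K : Finset (Finset V)) (v0 : V) (P S : Finset V) : ZMod 2 :=
  ∑ A ∈ suppPhi K v0 S, if P ⊆ A then 1 else 0

def phiBdryCoeff (K : Finset (Finset V)) (v0 : V) (P S : Finset V) : ZMod 2 :=
  ∑ S' ∈ S.powerset, if P ∈ suppPhi K v0 S' then 1 else 0

theorem bdryPhiCoeff_of_card_le {P S : Finset V} (hv0S : v0 ∉ S) (h : S.card ≤ P.card) :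
    bdryPhiCoeff K v0 P S = if P ∈ suppPhi K v0 S then 1 else 0 := by
  refine (sum_congr rfl fun A hA => if_congr ?_ rfl rfl).trans (sum_ite_eq' _ P _)
  refine ⟨fun hPA => ?_, fun hAP => hAP ▸ subset_refl P⟩
  exact (eq_of_subset_of_card_le hPA (card_of_mem_suppPhi hv0S hA ▸ h)).symm

theorem phiBdryCoeff_of_card_le {P S : Finset V} (hv0S : v0 ∉ S) (h : S.card ≤ P.card) :
    phiBdryCoeff K v0 P S = if P ∈ suppPhi K v0 S then 1 else 0 := by
  refine sum_eq_single_of_mem S (mem_powerset_self S) fun S' hS' hne => if_neg fun hP => hne ?_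
  have hS'S := mem_powerset.1 hS'
  exact eq_of_subset_of_card_le hS'S
    (card_of_mem_suppPhi (fun h => hv0S (hS'S h)) hP ▸ h)

theorem bdryPhiCoeff_eq_phiBdryCoeff_of_mem (hK : IsComplex K) {Q T : Finset V} (hT : T ∈ K) :
    bdryPhiCoeff K v0 Q T = phiBdryCoeff K v0 Q T := by
  rw [bdryPhiCoeff, phiBdryCoeff, suppPhi_of_mem hT, sum_singleton]
  simp only [← mem_powerset]
  refine ((sum_congr rfl fun S' hS' => if_congr ?_ rfl rfl).trans
    (sum_ite_eq' _ Q fun _ => (1 : ZMod 2))).symm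
  rw [suppPhi_of_mem (hK.2 T hT S' (mem_powerset.1 hS')), mem_singleton, eq_comm]

theorem phiBdryCoeff_eq_sum_erase {Q T : Finset V} (hv0T : v0 ∉ T)
    (hcard : Q.card + 1 = T.card) :
    phiBdryCoeff K v0 Q T = ∑ x ∈ T, if Q ∈ suppPhi K v0 (T.erase x) then 1 else 0 :=
  sum_powerset_eq_sum_erase fun _ hST hS => if_neg fun hQS => hS <|
    card_of_mem_suppPhi (fun h => hv0T (hST h)) hQS ▸ hcard

theorem bdryPhiCoeff_eq_phiBdryCoeff_of_card_add_one (hK : IsComplex K) (hne : v0 ≠ v1)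
    (h0 : {v0} ∈ K) (hadm : Admissible K v0 v1) {Q T : Finset V}
    (hT : T ∈ contractC K v0 v1) (hQ : Q ∈ K) (hcard : Q.card + 1 = T.card) :
    bdryPhiCoeff K v0 Q T = phiBdryCoeff K v0 Q T := by
  have hv0T := notMem_of_mem_contractC hne hT
  by_cases hTK : T ∈ K
  · exact bdryPhiCoeff_eq_phiBdryCoeff_of_mem hK hTK
  rw [bdryPhiCoeff, sum_suppPhi_of_notMem hTK hv0T, phiBdryCoeff_eq_sum_erase hv0T hcard]
  have hv0erase : ∀ x, v0 ∉ T.erase x := fun x h => hv0T (mem_of_mem_erase h)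
  have hcard_erase : ∀ x ∈ T, (T.erase x).card = Q.card := fun x hx => by
    rw [card_erase_of_mem hx]; omega
  have hadm' : ∀ x, insert v0 (T.erase x) ∈ K ↔ T.erase x ∈ K := fun x =>
    insert_mem_iff_of_admissible hK hne h0 hadm hT hTK (erase_subset x T)
  by_cases hv0Q : v0 ∈ Q
  · obtain ⟨R, hv0R, rfl⟩ : ∃ R, v0 ∉ R ∧ insert v0 R = Q :=
      ⟨Q.erase v0, notMem_erase v0 Q, insert_erase hv0Q⟩
    rw [card_insert_of_notMem hv0R] at hcard hcard_erase
    have hterm : ∀ x ∈ T,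
        ((if insert v0 (T.erase x) ∈ K then
          if insert v0 R ⊆ insert v0 (T.erase x) then (1 : ZMod 2) else 0 else 0) +
        if insert v0 R ∈ suppPhi K v0 (T.erase x) then 1 else 0) =
          if R ⊆ T.erase x then 1 else 0 := fun x hx => by
      simp only [hadm', insert_subset_insert_iff hv0R, insert_mem_suppPhi_iff (hv0erase x) hv0R,
        hQ, hcard_erase x hx, true_and, and_true]
      split_ifs <;> simp_all
    refine CharTwo.add_eq_zero.1 ?_
    rw [← sum_add_distrib, sum_congr rfl hterm]
    by_cases hRT : R ⊆ T
    · simp only [subset_erase, hRT, true_and, sum_boole, ← sdiff_eq_filter,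
        card_sdiff_of_subset hRT, show T.card - R.card = 2 by omega]
      rfl
    · exact sum_eq_zero fun x _ => if_neg fun h => hRT (h.trans (erase_subset x T))
  · refine sum_congr rfl fun x hx => ?_
    have hsub : Q ⊆ T.erase x ↔ T.erase x = Q :=
      ⟨fun h => (eq_of_subset_of_card_le h (hcard_erase x hx).le).symm, fun h => h ▸ subset_refl Q⟩
    simp only [hadm', subset_insert_iff_of_notMem hv0Q, hsub, mem_suppPhi_iff_eq hQ hv0Q]
    split_ifs <;> simp_all

theorem bdryPhiCoeff_eq_phiBdryCoeff (hK : IsComplex K) (hne : v0 ≠ v1) (h0 : {v0} ∈ K)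
    (hadm : Admissible K v0 v1) {P S : Finset V} (hS : S ∈ contractC K v0 v1) (hP : P ∈ K)
    (h : S.card ≤ P.card + 1) : bdryPhiCoeff K v0 P S = phiBdryCoeff K v0 P S := by
  rcases h.lt_or_eq with h | h
  · have hv0S := notMem_of_mem_contractC hne hS
    rw [bdryPhiCoeff_of_card_le hv0S (by omega), phiBdryCoeff_of_card_le hv0S (by omega)]
  · exact bdryPhiCoeff_eq_phiBdryCoeff_of_card_add_one hK hne h0 hadm hS hP h.symm

theorem bdryPhiCoeff_eq_zero_and_phiBdryCoeff_eq_zero (hne : v0 ≠ v1) {P S : Finset V}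
    (hS : S ∈ contractC K v0 v1) (h : S.card < P.card) :
    bdryPhiCoeff K v0 P S = 0 ∧ phiBdryCoeff K v0 P S = 0 := by
  have hv0S := notMem_of_mem_contractC hne hS
  have hP : P ∉ suppPhi K v0 S := fun hP => (card_of_mem_suppPhi hv0S hP ▸ h).false
  rw [bdryPhiCoeff_of_card_le hv0S h.le, phiBdryCoeff_of_card_le hv0S h.le, if_neg hP]
  exact ⟨rfl, rfl⟩

theorem bdryPhiCoeff_mul_eq_phiBdryCoeff_mul (hK : IsComplex K) (hne : v0 ≠ v1)
    (h0 : {v0} ∈ K) (hadm : Admissible K v0 v1) {P Q S T : Finset V}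
    (hS : S ∈ contractC K v0 v1) (hT : T ∈ contractC K v0 v1) (hP : P ∈ K) (hQ : Q ∈ K)
    (hcard : P.card + Q.card + 1 = S.card + T.card) :
    bdryPhiCoeff K v0 P S * bdryPhiCoeff K v0 Q T =
      phiBdryCoeff K v0 P S * phiBdryCoeff K v0 Q T := by
  by_cases hPS : S.card < P.card
  · obtain ⟨hf, hg⟩ := bdryPhiCoeff_eq_zero_and_phiBdryCoeff_eq_zero hne hS hPS
    rw [hf, hg, zero_mul, zero_mul]
  by_cases hQT : T.card < Q.card
  · obtain ⟨hf, hg⟩ := bdryPhiCoeff_eq_zero_and_phiBdryCoeff_eq_zero hne hT hQT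
    rw [hf, hg, mul_zero, mul_zero]
  rw [bdryPhiCoeff_eq_phiBdryCoeff hK hne h0 hadm hS hP (by omega),
    bdryPhiCoeff_eq_phiBdryCoeff hK hne h0 hadm hT hQ (by omega)]

end Coefficients

section Matrices

def bdryMatrix (L : Finset (Finset V)) (n : ℕ) :
    Matrix (facesOfDim L n) (facesOfDim L (n + 1)) (ZMod 2) :=
  Matrix.of fun G F => if G.1 ⊆ F.1 then 1 else 0

def phiMatrix (K K' : Finset (Finset V)) (v0 : V) (n : ℕ) :
    Matrix (facesOfDim (deletedJoin K) n) (facesOfDim (deletedJoin K') n) (ZMod 2) :=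
  Matrix.of fun A G => if A.1 ∈ suppPhiStar K v0 G.1 then 1 else 0

theorem bdry_eq_mulVec (L : Finset (Finset V)) (n : ℕ) : bdry L n = (bdryMatrix L n *ᵥ ·) := by
  funext c G
  simp [bdry, bdryMatrix, Matrix.mulVec, dotProduct, univ_eq_attach]

theorem phiStar_eq_mulVec (K K' : Finset (Finset V)) (v0 : V) (n : ℕ) :
    phiStar K K' v0 n = (phiMatrix K K' v0 n *ᵥ ·) := by
  funext c A
  simp [phiStar, phiMatrix, Matrix.mulVec, dotProduct, univ_eq_attach]

end Matrices

section MatrixIdentities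

variable {K : Finset (Finset V)} {v0 v1 : V} {n : ℕ}

theorem bdryMatrix_mul_phiMatrix_apply (hK : IsComplex K) (hne : v0 ≠ v1)
    (A : facesOfDim (deletedJoin K) n)
    (G : facesOfDim (deletedJoin (contractC K v0 v1)) (n + 1)) :
    (bdryMatrix (deletedJoin K) n * phiMatrix K (contractC K v0 v1) v0 (n + 1)) A G =
      bdryPhiCoeff K v0 A.1.toLeft G.1.toLeft * bdryPhiCoeff K v0 A.1.toRight G.1.toRight := by
  simp only [mul_apply, bdryMatrix, phiMatrix, of_apply, mul_boole]
  rw [sum_coe_sort (facesOfDim (deletedJoin K) (n + 1))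
      fun F => if F ∈ suppPhiStar K v0 G.1 then if A.1 ⊆ F then 1 else 0 else 0,
    ← sum_subset (suppPhiStar_subset_facesOfDim hK hne G.2) fun F _ hF => if_neg hF,
    sum_congr rfl fun F hF => if_pos hF, sum_suppPhiStar, bdryPhiCoeff, bdryPhiCoeff, sum_mul_sum]
  simp only [subset_disjSum, ite_zero_mul_ite_zero, mul_one]

theorem phiMatrix_mul_bdryMatrix_apply (hK : IsComplex K) (hne : v0 ≠ v1)
    (A : facesOfDim (deletedJoin K) n)
    (G : facesOfDim (deletedJoin (contractC K v0 v1)) (n + 1)) :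
    (phiMatrix K (contractC K v0 v1) v0 n * bdryMatrix (deletedJoin (contractC K v0 v1)) n) A G =
      phiBdryCoeff K v0 A.1.toLeft G.1.toLeft * phiBdryCoeff K v0 A.1.toRight G.1.toRight := by
  simp only [mul_apply, bdryMatrix, phiMatrix, of_apply, boole_mul]
  rw [sum_coe_sort (facesOfDim (deletedJoin (contractC K v0 v1)) n)
      fun G' => if A.1 ∈ suppPhiStar K v0 G' then if G' ⊆ G.1 then 1 else 0 else 0]
  have hpow : ∀ G' : Finset (V ⊕ V),
      (if A.1 ∈ suppPhiStar K v0 G' then if G' ⊆ G.1 then (1 : ZMod 2) else 0 else 0) =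
        if G' ∈ G.1.powerset then if A.1 ∈ suppPhiStar K v0 G' then 1 else 0 else 0 := fun G' => by
    by_cases h : G' ⊆ G.1 <;> simp [h]
  rw [sum_congr rfl fun G' _ => hpow G', sum_ite_mem,
    sum_subset inter_subset_right fun G' hG' hG'' => if_neg fun hA => hG'' <| mem_inter.2
      ⟨mem_facesOfDim_of_mem_suppPhiStar hK hne A.2 G.2 (mem_powerset.1 hG') hA, hG'⟩,
    sum_powerset_eq_sum_sum, phiBdryCoeff, phiBdryCoeff, sum_mul_sum]
  simp only [mem_suppPhiStar, toLeft_disjSum, toRight_disjSum, ite_zero_mul_ite_zero, mul_one]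

theorem bdryMatrix_mul_phiMatrix (hK : IsComplex K) (hne : v0 ≠ v1) (h0 : {v0} ∈ K)
    (hadm : Admissible K v0 v1) :
    bdryMatrix (deletedJoin K) n * phiMatrix K (contractC K v0 v1) v0 (n + 1) =
      phiMatrix K (contractC K v0 v1) v0 n * bdryMatrix (deletedJoin (contractC K v0 v1)) n := by
  ext A G
  rw [bdryMatrix_mul_phiMatrix_apply hK hne, phiMatrix_mul_bdryMatrix_apply hK hne]
  obtain ⟨hAJ, hAcard⟩ := mem_facesOfDim.1 A.2
  obtain ⟨hGJ, hGcard⟩ := mem_facesOfDim.1 G.2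
  obtain ⟨hP, hQ, -⟩ := mem_deletedJoin.1 hAJ
  obtain ⟨hS, hT, -⟩ := mem_deletedJoin.1 hGJ
  refine bdryPhiCoeff_mul_eq_phiBdryCoeff_mul hK hne h0 hadm hS hT hP hQ ?_
  rw [card_toLeft_add_card_toRight, card_toLeft_add_card_toRight, hAcard, hGcard]

theorem exists_phiMatrix_row_eq_single (hK : IsComplex K) (hne : v0 ≠ v1)
    (G : facesOfDim (deletedJoin (contractC K v0 v1)) n) :
    ∃ A, phiMatrix K (contractC K v0 v1) v0 n A = Pi.single G 1 := by
  obtain ⟨hS, hT, -⟩ := mem_deletedJoin.1 (mem_facesOfDim.1 G.2).1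
  have hA : (canonFace K v0 v1 G.1.toLeft).disjSum (canonFace K v0 v1 G.1.toRight) ∈
      suppPhiStar K v0 G.1 := by
    rw [mem_suppPhiStar, toLeft_disjSum, toRight_disjSum]
    exact ⟨canonFace_mem_suppPhi hK hS, canonFace_mem_suppPhi hK hT⟩
  refine ⟨⟨_, suppPhiStar_subset_facesOfDim hK hne G.2 hA⟩, funext fun G' => ?_⟩
  simp only [phiMatrix, of_apply, Pi.single_apply]
  refine if_congr ⟨fun h => ?_, fun h => h ▸ hA⟩ rfl rfl
  obtain ⟨hS', hT', -⟩ := mem_deletedJoin.1 (mem_facesOfDim.1 G'.2).1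
  rw [mem_suppPhiStar, toLeft_disjSum, toRight_disjSum] at h
  exact Subtype.ext <| sumEquiv.injective <| Prod.ext
    (eq_of_canonFace_mem_suppPhi hK hne hS hS' h.1) (eq_of_canonFace_mem_suppPhi hK hne hT hT' h.2)

end MatrixIdentities

section Involution

theorem tauFace_tauFace {W : Type*} (F : Finset (W ⊕ W)) : tauFace (tauFace F) = F := by
  ext (x | x) <;> simp [tauFace]

theorem tauFace_mem_facesOfDim {L : Finset (Finset V)} {n : ℕ} {F : Finset (V ⊕ V)}
    (hF : F ∈ facesOfDim (deletedJoin L) n) : tauFace F ∈ facesOfDim (deletedJoin L) n := by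
  obtain ⟨hFJ, hFcard⟩ := mem_facesOfDim.1 hF
  exact mem_facesOfDim.2 ⟨tauFace_mem_deletedJoin hFJ, (card_map _).trans hFcard⟩

def tauPerm (L : Finset (Finset V)) (n : ℕ) : Equiv.Perm (facesOfDim (deletedJoin L) n) :=
  Function.Involutive.toPerm (fun F => ⟨tauFace F.1, tauFace_mem_facesOfDim F.2⟩)
    fun F => Subtype.ext (tauFace_tauFace F.1)

theorem tauChain_deletedJoin (L : Finset (Finset V)) (n : ℕ) (c : Chains (deletedJoin L) n) :
    tauChain (deletedJoin L) n c = c ∘ tauPerm L n := by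
  funext F
  exact dif_pos (tauFace_mem_facesOfDim F.2)

theorem phiMatrix_submatrix_tauPerm (K K' : Finset (Finset V)) (v0 : V) (n : ℕ) :
    (phiMatrix K K' v0 n).submatrix (tauPerm K n) (tauPerm K' n) = phiMatrix K K' v0 n := by
  ext A G
  exact if_congr tauFace_mem_suppPhiStar_tauFace rfl rfl

end Involution

theorem phiStar_injective_equivariant_chain_map_general
    (K : Finset (Finset V)) (hK : IsComplex K) (v0 v1 : V) (hne : v0 ≠ v1)
    (h0 : ({v0} : Finset V) ∈ K) (hadm : Admissible K v0 v1) :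
    (∀ S T : Finset V, S ∈ contractC K v0 v1 → T ∈ contractC K v0 v1 → S ∩ T = ∅ →
      ∀ A ∈ suppPhi K v0 S, ∀ B ∈ suppPhi K v0 T,
        A ∩ B = ∅ ∧ joinFace A B ∈ deletedJoin K) ∧
    (∀ n : ℕ, Function.Injective (phiStar K (contractC K v0 v1) v0 n)) ∧
    (∀ n : ℕ, IsLinearMap (ZMod 2) (phiStar K (contractC K v0 v1) v0 n)) ∧
    (∀ (n : ℕ) (c : Chains (deletedJoin (contractC K v0 v1)) (n + 1)),
      bdry (deletedJoin K) n (phiStar K (contractC K v0 v1) v0 (n + 1) c) =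
        phiStar K (contractC K v0 v1) v0 n
          (bdry (deletedJoin (contractC K v0 v1)) n c)) ∧
    (∀ (n : ℕ) (c : Chains (deletedJoin (contractC K v0 v1)) n),
      phiStar K (contractC K v0 v1) v0 n
          (tauChain (deletedJoin (contractC K v0 v1)) n c) =
        tauChain (deletedJoin K) n (phiStar K (contractC K v0 v1) v0 n c)) := by
  refine ⟨fun S T hS hT hST A hA B hB => ?_, fun n => ?_, fun n => ?_, fun n c => ?_,
    fun n c => ?_⟩
  · have hAB := inter_eq_empty_of_mem_suppPhi hK hne hS hT hST hA hB
    rw [joinFace_eq_disjSum, disjSum_mem_deletedJoin]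
    exact ⟨hAB, mem_of_mem_suppPhi hA, mem_of_mem_suppPhi hB, hAB⟩
  · rw [phiStar_eq_mulVec]
    exact mulVec_injective_of_forall_exists_row_eq_single (exists_phiMatrix_row_eq_single hK hne)
  · rw [phiStar_eq_mulVec]
    exact (mulVecLin _).isLinear
  · simp only [phiStar_eq_mulVec, bdry_eq_mulVec, mulVec_mulVec,
      bdryMatrix_mul_phiMatrix hK hne h0 hadm]
  · simp only [tauChain_deletedJoin, phiStar_eq_mulVec,
      mulVec_comp_perm (phiMatrix_submatrix_tauPerm _ _ _ _)]

/-- For an admissible contraction of `v0` onto `v1` turning `K` into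
`K'`, every set `A¹ ⊎ B²` occurring in `φ_*(S¹ ⊎ T²)` is a face of `K_*`
(in particular `A ∩ B = ∅`), and the linear extension
`φ_* : C_•(K'_*;ℤ/2) → C_•(K_*;ℤ/2)` is an injective chain map commuting with the
linear maps induced by the involutions `τ` of `K'_*` and of `K_*`. -/
theorem phiStar_injective_equivariant_chain_map
    (K : Finset (Finset V)) (hK : IsComplex K) (v0 v1 : V) (hne : v0 ≠ v1)
    (h0 : ({v0} : Finset V) ∈ K) (h1 : ({v1} : Finset V) ∈ K)
    (hadm : Admissible K v0 v1) :
    (∀ S T : Finset V, S ∈ contractC K v0 v1 → T ∈ contractC K v0 v1 → S ∩ T = ∅ →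
      ∀ A ∈ suppPhi K v0 S, ∀ B ∈ suppPhi K v0 T,
        A ∩ B = ∅ ∧ joinFace A B ∈ deletedJoin K) ∧
    (∀ n : ℕ, Function.Injective (phiStar K (contractC K v0 v1) v0 n)) ∧
    (∀ n : ℕ, IsLinearMap (ZMod 2) (phiStar K (contractC K v0 v1) v0 n)) ∧
    (∀ (n : ℕ) (c : Chains (deletedJoin (contractC K v0 v1)) (n + 1)),
      bdry (deletedJoin K) n (phiStar K (contractC K v0 v1) v0 (n + 1) c) =
        phiStar K (contractC K v0 v1) v0 n
          (bdry (deletedJoin (contractC K v0 v1)) n c)) ∧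
    (∀ (n : ℕ) (c : Chains (deletedJoin (contractC K v0 v1)) n),
      phiStar K (contractC K v0 v1) v0 n
          (tauChain (deletedJoin (contractC K v0 v1)) n c) =
        tauChain (deletedJoin K) n (phiStar K (contractC K v0 v1) v0 n c)) :=
  phiStar_injective_equivariant_chain_map_general K hK v0 v1 hne h0 hadm
end

section
/- Let M be a simplicial complex, let {a,b} ∈ M be an edge, and let M' be the contraction of a onto b. Let B denote the complex whose faces are the sets S and S ∪ {b} for S ∈ ast(b, lk(a,M)) (i.e., B = {b} * ast(b, lk(a,M))). Then M' = ast(a,M) ∪ B, and ast(a,M) ∩ B = lk(a,M) ∪ {S ∪ {b} : S ∈ lk(a,M) ∩ lk(b,M)}. -/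
open Finset

variable {V : Type*} [DecidableEq V]

/-- The antistar of a vertex: `ast(v,K) = {T ∈ K : v ∉ T}`. -/
def astC (K : Finset (Finset V)) (v : V) : Finset (Finset V) :=
  K.filter fun T => v ∉ T

/-- `B = {b} * ast(b, lk(a,M))`: the faces are the sets `S` and `S ∪ {b}`
for `S ∈ ast(b, lk(a,M))`. -/
def coneB (M : Finset (Finset V)) (a b : V) : Finset (Finset V) :=
  astC (linkC M {a}) b ∪ (astC (linkC M {a}) b).image fun S => insert b S

/-! Deleting `a` maps the faces of `M` containing `a` bijectively onto `lk(a,M)`, so the faces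
of the contraction outside `ast(a,M)` are the sets `R ∪ {b}` with `R ∈ lk(a,M)`; since `lk(a,M)`
is closed under subsets one may take `b ∉ R`, which is the cone part of `B`. A cone face
`R ∪ {b}` lies in `ast(a,M)` exactly when `R ∈ lk(b,M)`, and a face of `lk(a,M)` containing `b`
is such a set. -/

section

variable {K L : Finset (Finset V)} {u v : V} {T : Finset V}

theorem mem_astC : T ∈ astC K v ↔ T ∈ K ∧ v ∉ T := mem_filter

theorem astC_subset : astC K v ⊆ K := filter_subset _ _

theorem mem_linkC_singleton : T ∈ linkC K {u} ↔ T ∈ K ∧ u ∉ T ∧ insert u T ∈ K := by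
  simp [linkC, ← disjoint_iff_inter_eq_empty]

theorem linkC_singleton_subset_astC : linkC K {u} ⊆ astC K u := fun _ hT =>
  let ⟨hTK, huT, _⟩ := mem_linkC_singleton.1 hT
  mem_astC.2 ⟨hTK, huT⟩

theorem isLowerSet_linkC (hK : IsLowerSet (K : Set (Finset V))) (S : Finset V) :
    IsLowerSet (linkC K S : Set (Finset V)) := by
  intro T R hRT hT
  simp only [linkC, coe_filter, Set.mem_ofPred_eq] at hT ⊢
  obtain ⟨hTK, hTS, hTSK⟩ := hT
  exact ⟨hK hRT hTK, subset_empty.1 (hTS ▸ inter_subset_inter_right hRT),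
    hK (union_subset_union_left hRT) hTSK⟩

theorem image_erase_filter_mem_eq_linkC (hK : IsLowerSet (K : Set (Finset V))) (u : V) :
    (K.filter (u ∈ ·)).image (·.erase u) = linkC K {u} := by
  ext T
  simp only [mem_image, mem_filter, mem_linkC_singleton]
  constructor
  · rintro ⟨S, ⟨hSK, huS⟩, rfl⟩
    exact ⟨hK (erase_subset u S) hSK, notMem_erase u S, by rwa [insert_erase huS]⟩
  · rintro ⟨-, huT, huTK⟩
    exact ⟨insert u T, ⟨huTK, mem_insert_self u T⟩, erase_insert huT⟩

theorem image_insert_astC (hL : IsLowerSet (L : Set (Finset V))) (v : V) :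
    (astC L v).image (insert v) = L.image (insert v) := by
  refine (image_subset_image astC_subset).antisymm fun _ hT => ?_
  obtain ⟨R, hRL, rfl⟩ := mem_image.1 hT
  refine mem_image.2 ⟨R.erase v, mem_astC.2 ⟨hL (erase_subset v R) hRL, notMem_erase v R⟩, ?_⟩
  ext x
  by_cases hx : x = v <;> simp [hx]

theorem contractC_eq_astC_union_image_insert (hK : IsLowerSet (K : Set (Finset V))) (u v : V) :
    contractC K u v = astC K u ∪ (linkC K {u}).image (insert v) := by
  rw [contractC, ← image_erase_filter_mem_eq_linkC hK, image_image]
  rfl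

theorem astC_inter_image_insert_astC_linkC (huv : u ≠ v) :
    astC K u ∩ (astC (linkC K {u}) v).image (insert v) =
      (linkC K {u} ∩ linkC K {v}).image (insert v) := by
  ext T
  simp only [mem_inter, mem_image, mem_astC, mem_linkC_singleton]
  constructor
  · rintro ⟨⟨hTK, -⟩, R, ⟨⟨hRK, huR, huRK⟩, hvR⟩, rfl⟩
    exact ⟨R, ⟨⟨hRK, huR, huRK⟩, hRK, hvR, hTK⟩, rfl⟩
  · rintro ⟨R, ⟨⟨hRK, huR, huRK⟩, -, hvR, hvRK⟩, rfl⟩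
    refine ⟨⟨hvRK, ?_⟩, R, ⟨⟨hRK, huR, huRK⟩, hvR⟩, rfl⟩
    rw [mem_insert, not_or]
    exact ⟨huv, huR⟩

theorem erase_mem_linkC_inter_linkC (hK : IsLowerSet (K : Set (Finset V)))
    (hT : T ∈ linkC K {u}) (hvT : v ∈ T) : T.erase v ∈ linkC K {u} ∩ linkC K {v} := by
  refine mem_inter.2 ⟨isLowerSet_linkC hK {u} (erase_subset v T) hT, ?_⟩
  have hTK := (mem_linkC_singleton.1 hT).1
  exact mem_linkC_singleton.2
    ⟨hK (erase_subset v T) hTK, notMem_erase v T, by rwa [insert_erase hvT]⟩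

theorem astC_linkC_union_image_insert (hK : IsLowerSet (K : Set (Finset V))) :
    astC (linkC K {u}) v ∪ (linkC K {u} ∩ linkC K {v}).image (insert v) =
      linkC K {u} ∪ (linkC K {u} ∩ linkC K {v}).image (insert v) := by
  refine (union_subset_union_left astC_subset).antisymm
    (union_subset (fun T hT => ?_) subset_union_right)
  by_cases hvT : v ∈ T
  · exact mem_union_right _
      (mem_image.2 ⟨T.erase v, erase_mem_linkC_inter_linkC hK hT hvT, insert_erase hvT⟩)
  · exact mem_union_left _ (mem_astC.2 ⟨hT, hvT⟩)

end

theorem contraction_eq_antistar_union_cone_general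
    (M : Finset (Finset V)) (hM : IsComplex M) (a b : V) (hab : a ≠ b) :
    contractC M a b = astC M a ∪ coneB M a b ∧
    astC M a ∩ coneB M a b =
      linkC M {a} ∪ (linkC M {a} ∩ linkC M {b}).image (fun S => insert b S) := by
  have hlower : IsLowerSet (M : Set (Finset V)) := fun S T hTS hS => hM.2 S hS T hTS
  have hA : astC (linkC M {a}) b ⊆ astC M a :=
    astC_subset.trans linkC_singleton_subset_astC
  constructor
  · rw [contractC_eq_astC_union_image_insert hlower, coneB,
      image_insert_astC (isLowerSet_linkC hlower _), ← union_assoc, union_eq_left.2 hA]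
  · rw [coneB, inter_union_distrib_left, inter_eq_right.2 hA,
      astC_inter_image_insert_astC_linkC hab, astC_linkC_union_image_insert hlower]

/-- For an edge `{a,b}` of `M`, with `M'` the contraction of `a`
onto `b` and `B = {b} * ast(b, lk(a,M))`: `M' = ast(a,M) ∪ B` and
`ast(a,M) ∩ B = lk(a,M) ∪ {S ∪ {b} : S ∈ lk(a,M) ∩ lk(b,M)}`. -/
theorem contraction_eq_antistar_union_cone
    (M : Finset (Finset V)) (hM : IsComplex M) (a b : V) (hab : a ≠ b)
    (he : ({a, b} : Finset V) ∈ M) :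
    contractC M a b = astC M a ∪ coneB M a b ∧
    astC M a ∩ coneB M a b =
      linkC M {a} ∪ (linkC M {a} ∩ linkC M {b}).image (fun S => insert b S) :=
  contraction_eq_antistar_union_cone_general M hM a b hab
end
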